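/- Let G be a finite simple undirected connected graph with at least two vertices and positive vertex weights, and let {(B_1,C_1),…,(B_k,C_k)} be its bottleneck decomposition with α-ratios α_i = w(C_i)/w(B_i). Then 0 < α_1 < α_2 < ⋯ < α_k ≤ 1. -/
import Mathlib


open Finset

/-- The total weight of a finite set of vertices. -/
def wsum {V : Type*} (w : V → ℝ) (S : Finset V) : ℝ := ∑ v ∈ S, w v

/-- The neighborhood of `S` inside the induced subgraph on `A`: all vertices of `A` adjacent
to at least one vertex of `S`. -/
def nbhdIn {V : Type*} [DecidableEq V] (G : SimpleGraph V) [DecidableRel G.Adj]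
    (A S : Finset V) : Finset V :=
  A.filter fun v => ∃ u ∈ S, G.Adj u v

/-- The α-ratio of `S` computed inside the induced subgraph on `A`. -/
noncomputable def alphaIn {V : Type*} [DecidableEq V] (G : SimpleGraph V)
    [DecidableRel G.Adj] (w : V → ℝ) (A S : Finset V) : ℝ :=
  wsum w (nbhdIn G A S) / wsum w S

/-- `B` is the maximal bottleneck of the induced subgraph `G[A]`: it is a nonempty subset of
`A` of minimal α-ratio (within `G[A]`) and every strictly larger subset of `A` has strictly
larger α-ratio. -/
def IsMaxBottleneckIn {V : Type*} [DecidableEq V] (G : SimpleGraph V) [DecidableRel G.Adj]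
    (w : V → ℝ) (A B : Finset V) : Prop :=
  B.Nonempty ∧ B ⊆ A ∧
    (∀ S : Finset V, S.Nonempty → S ⊆ A → alphaIn G w A B ≤ alphaIn G w A S) ∧
    ∀ B' : Finset V, B ⊂ B' → B' ⊆ A → alphaIn G w A B < alphaIn G w A B'

lemma wsum_pos {V : Type*} {w : V → ℝ} (hw : ∀ v, 0 < w v) {S : Finset V}
    (hS : S.Nonempty) : 0 < wsum w S :=
  Finset.sum_pos (fun i _ => hw i) hS

lemma wsum_nonneg {V : Type*} {w : V → ℝ} (hw : ∀ v, 0 < w v) (S : Finset V) :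
    0 ≤ wsum w S :=
  Finset.sum_nonneg (fun i _ => (hw i).le)

lemma wsum_mono {V : Type*} [DecidableEq V] {w : V → ℝ} (hw : ∀ v, 0 < w v)
    {S T : Finset V} (h : S ⊆ T) : wsum w S ≤ wsum w T :=
  Finset.sum_le_sum_of_subset_of_nonneg h (fun i _ _ => (hw i).le)

theorem bottleneck_decomposition_alpha_ratios {V : Type*} [Fintype V] [DecidableEq V]
    (G : SimpleGraph V) [DecidableRel G.Adj] (w : V → ℝ)
    (hw : ∀ v, 0 < w v) (hconn : G.Connected) (hcard : 2 ≤ Fintype.card V)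
    (k : ℕ) (B C : Fin k → Finset V) (Vs : Fin (k + 1) → Finset V)
    (hV0 : Vs 0 = univ)
    (hVsucc : ∀ i : Fin k, Vs i.succ = Vs i.castSucc \ (B i ∪ C i))
    (hVlast : Vs (Fin.last k) = ∅)
    (hB : ∀ i : Fin k, IsMaxBottleneckIn G w (Vs i.castSucc) (B i))
    (hC : ∀ i : Fin k, C i = nbhdIn G (Vs i.castSucc) (B i)) :
    (∀ i : Fin k, 0 < wsum w (C i) / wsum w (B i)) ∧
    (∀ i j : Fin k, i < j →
      wsum w (C i) / wsum w (B i) < wsum w (C j) / wsum w (B j)) ∧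
    (∀ i : Fin k, wsum w (C i) / wsum w (B i) ≤ 1) := by
  have hBne : ∀ i : Fin k, (B i).Nonempty := fun i => (hB i).1
  have hBsub : ∀ i : Fin k, B i ⊆ Vs i.castSucc := fun i => (hB i).2.1
  have hBpos : ∀ i : Fin k, 0 < wsum w (B i) := fun i => wsum_pos hw (hBne i)
  have halpha : ∀ i : Fin k,
      alphaIn G w (Vs i.castSucc) (B i) = wsum w (C i) / wsum w (B i) := by
    intro i; rw [alphaIn, hC i]
  -- F2 : no vertex of Vs i.succ is adjacent to B i
  have hF2 : ∀ i : Fin k, ∀ v ∈ Vs i.succ, ∀ u ∈ B i, ¬ G.Adj u v := by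
    intro i v hv u hu hadj
    rw [hVsucc i, Finset.mem_sdiff] at hv
    exact hv.2 (Finset.mem_union_right _ (by
      rw [hC i, nbhdIn, Finset.mem_filter]
      exact ⟨hv.1, u, hu, hadj⟩))
  -- consecutive inequality
  have hcons : ∀ i j : Fin k, (i : ℕ) + 1 = (j : ℕ) →
      wsum w (C i) / wsum w (B i) < wsum w (C j) / wsum w (B j) := by
    intro i j hij
    have hjc : j.castSucc = i.succ := by
      apply Fin.ext; simp [hij.symm]
    have hA' : Vs j.castSucc = Vs i.castSucc \ (B i ∪ C i) := by
      rw [hjc, hVsucc i]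
    -- B j and C j are disjoint from B i ∪ C i
    have hBjsub : B j ⊆ Vs i.castSucc \ (B i ∪ C i) := hA' ▸ hBsub j
    have hCjsub : C j ⊆ Vs i.castSucc \ (B i ∪ C i) := by
      rw [← hA', hC j]; exact Finset.filter_subset _ _
    have hdisjB : Disjoint (B i) (B j) := by
      rw [Finset.disjoint_left]
      intro a ha hb
      have := hBjsub hb
      rw [Finset.mem_sdiff] at this
      exact this.2 (Finset.mem_union_left _ ha)
    have hdisjC : Disjoint (C i) (C j) := by
      rw [Finset.disjoint_left]
      intro a ha hb
      have := hCjsub hb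
      rw [Finset.mem_sdiff] at this
      exact this.2 (Finset.mem_union_right _ ha)
    -- F3 : the neighborhood of B i ∪ B j inside Vs i.castSucc is contained in C i ∪ C j
    have hF3 : nbhdIn G (Vs i.castSucc) (B i ∪ B j) ⊆ C i ∪ C j := by
      intro v hv
      rw [nbhdIn, Finset.mem_filter] at hv
      obtain ⟨hvA, u, hu, hadj⟩ := hv
      rw [Finset.mem_union] at hu
      rcases hu with hu | hu
      · exact Finset.mem_union_left _ (by
          rw [hC i, nbhdIn, Finset.mem_filter]; exact ⟨hvA, u, hu, hadj⟩)
      · by_cases hvA' : v ∈ Vs j.castSucc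
        · exact Finset.mem_union_right _ (by
            rw [hC j, nbhdIn, Finset.mem_filter]; exact ⟨hvA', u, hu, hadj⟩)
        · -- v ∈ Vs i.castSucc \ Vs j.castSucc, so v ∈ B i ∪ C i
          have hvBC : v ∈ B i ∪ C i := by
            by_contra hvBC
            exact hvA' (by rw [hA', Finset.mem_sdiff]; exact ⟨hvA, hvBC⟩)
          rw [Finset.mem_union] at hvBC
          rcases hvBC with hvB | hvC
          · -- u ∈ B j ⊆ Vs i.succ adjacent to v ∈ B i : contradiction with F2
            exact absurd hadj.symm
              (hF2 i u (by rw [← hjc]; exact hBsub j hu) v hvB)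
          · exact Finset.mem_union_left _ hvC
    -- now the mediant argument
    by_contra hlt
    push_neg at hlt
    have hS : B i ⊂ B i ∪ B j := by
      refine Finset.ssubset_iff_of_subset Finset.subset_union_left |>.mpr ?_
      obtain ⟨b, hb⟩ := hBne j
      exact ⟨b, Finset.mem_union_right _ hb, fun hbb => (Finset.disjoint_left.mp hdisjB hbb hb)⟩
    have hSsub : B i ∪ B j ⊆ Vs i.castSucc := by
      apply Finset.union_subset (hBsub i)
      intro a ha
      exact (Finset.mem_sdiff.mp (hBjsub ha)).1
    have hmax := (hB i).2.2.2 (B i ∪ B j) hS hSsub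
    rw [halpha i] at hmax
    -- estimate alphaIn of the union
    have hnum : wsum w (nbhdIn G (Vs i.castSucc) (B i ∪ B j)) ≤ wsum w (C i) + wsum w (C j) := by
      calc wsum w (nbhdIn G (Vs i.castSucc) (B i ∪ B j)) ≤ wsum w (C i ∪ C j) :=
            wsum_mono hw hF3
        _ = wsum w (C i) + wsum w (C j) := Finset.sum_union hdisjC
    have hden : wsum w (B i ∪ B j) = wsum w (B i) + wsum w (B j) := Finset.sum_union hdisjB
    set bi := wsum w (B i) with hbi
    set bj := wsum w (B j) with hbj
    set ci := wsum w (C i) with hci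
    set cj := wsum w (C j) with hcj
    have hbi0 : 0 < bi := hBpos i
    have hbj0 : 0 < bj := hBpos j
    have hcross : cj * bi ≤ ci * bj := by
      rw [div_le_div_iff₀ hbj0 hbi0] at hlt
      linarith
    have hmed : (ci + cj) / (bi + bj) ≤ ci / bi := by
      rw [div_le_div_iff₀ (by linarith) hbi0]
      nlinarith
    have halphaS : alphaIn G w (Vs i.castSucc) (B i ∪ B j) ≤ (ci + cj) / (bi + bj) := by
      rw [alphaIn, hden]
      apply div_le_div_of_nonneg_right hnum (by linarith) |>.trans_eq rfl
    linarith [hmax.trans_le (halphaS.trans hmed)]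
  -- the chain inequality
  have hchain : ∀ n : ℕ, ∀ i j : Fin k, (j : ℕ) ≤ n → i < j →
      wsum w (C i) / wsum w (B i) < wsum w (C j) / wsum w (B j) := by
    intro n
    induction n with
    | zero =>
      intro i j hj hij
      rw [Fin.lt_def] at hij
      omega
    | succ n ih =>
      intro i j hj hij
      rw [Fin.lt_def] at hij
      by_cases hc : (i : ℕ) + 1 = (j : ℕ)
      · exact hcons i j hc
      · have hm : (j : ℕ) - 1 < k := by omega
        set m : Fin k := ⟨(j : ℕ) - 1, hm⟩ with hmdef
        have h1 : wsum w (C i) / wsum w (B i) < wsum w (C m) / wsum w (B m) := by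
          apply ih i m (by simp [hmdef]; omega) (by rw [Fin.lt_def]; simp [hmdef]; omega)
        have h2 : wsum w (C m) / wsum w (B m) < wsum w (C j) / wsum w (B j) :=
          hcons m j (by simp [hmdef]; omega)
        linarith
  refine ⟨?_, fun i j hij => hchain k i j (le_of_lt j.isLt) hij, ?_⟩
  · -- positivity
    intro i
    have hk : 0 < k := i.pos
    set i0 : Fin k := ⟨0, hk⟩ with hi0def
    have hVi0 : Vs i0.castSucc = univ := by
      have : i0.castSucc = (0 : Fin (k + 1)) := by apply Fin.ext; simp [hi0def]
      rw [this, hV0]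
    have hC0ne : (C i0).Nonempty := by
      obtain ⟨u, hu⟩ := hBne i0
      obtain ⟨x, hx⟩ := Fintype.exists_ne_of_one_lt_card hcard u
      obtain ⟨p⟩ := hconn.preconnected u x
      have hadj : ∃ v, G.Adj u v := by
        cases p with
        | nil => exact absurd rfl hx
        | cons h _ => exact ⟨_, h⟩
      obtain ⟨v, hv⟩ := hadj
      refine ⟨v, ?_⟩
      rw [hC i0, nbhdIn, Finset.mem_filter, hVi0]
      exact ⟨Finset.mem_univ v, u, hu, hv⟩
    have hr0 : 0 < wsum w (C i0) / wsum w (B i0) :=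
      div_pos (wsum_pos hw hC0ne) (hBpos i0)
    rcases eq_or_lt_of_le (show i0 ≤ i by rw [Fin.le_def]; simp [hi0def]) with h | h
    · rw [← h]; exact hr0
    · exact hr0.trans (hchain k i0 i (le_of_lt i.isLt) h)
  · -- ≤ 1
    intro i
    set A := Vs i.castSucc with hAdef
    have hAne : A.Nonempty := (hBne i).mono (hBsub i)
    have hApos : 0 < wsum w A := wsum_pos hw hAne
    have h1 : alphaIn G w A (B i) ≤ alphaIn G w A A :=
      (hB i).2.2.1 A hAne Finset.Subset.rfl
    have h2 : alphaIn G w A A ≤ 1 := by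
      rw [alphaIn, div_le_one hApos]
      exact wsum_mono hw (Finset.filter_subset _ _)
    rw [halpha i] at h1
    exact h1.trans h2
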